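/- Let G be a connected graph with a bridge e = {v1, v2} whose removal yields components G1 (containing v1) and G2 (containing v2), with m1, m2 edges respectively, and m = m1 + m2 + 1 edges in G. Then Kemeny's constant satisfies κ(G) = κ(G1) + κ(G2) + ((m2+1)/m)·α_{G1}(v1) + ((m1+1)/m)·α_{G2}(v2) + (2m1+1)(2m2+1)/(2m). -/

import Mathlib

/-!
The mean first passage times of the joined graph can be written down explicitly in terms of those
of `G1` and `G2`. This candidate satisfies the first-step equations, whose solution on a connected
graph is unique by the maximum principle for harmonic functions. By the random target lemma,
`κ(G)` may then be computed from the single starting vertex `v1`, where the explicit formula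
expresses it through `κ(G1)`, `κ(G2)`, `α_{G1}(v1)` and `α_{G2}(v2)`.
-/

open SimpleGraph Finset Matrix
open scoped Classical

noncomputable section

/-- Number of spanning trees of `G`. -/
noncomputable def tau {V : Type*} [Fintype V] (G : SimpleGraph V) : ℕ :=
  Set.ncard {H : SimpleGraph V | H ≤ G ∧ H.Connected ∧ H.IsAcyclic}

/-- Number of 2-tree spanning forests of `G` separating `i` and `j`. -/
noncomputable def twoForest {V : Type*} [Fintype V] (G : SimpleGraph V) (i j : V) : ℕ :=
  Set.ncard {H : SimpleGraph V | H ≤ G ∧ H.IsAcyclic ∧ ¬ H.Reachable i j ∧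
    ∀ v, H.Reachable i v ∨ H.Reachable j v}

/-- The four Penrose equations: `B` is the Moore–Penrose inverse of `A`. -/
def IsMoorePenroseInv {n : Type*} [Fintype n] (A B : Matrix n n ℝ) : Prop :=
  A * B * A = A ∧ B * A * B = B ∧ (A * B)ᵀ = A * B ∧ (B * A)ᵀ = B * A

/-- Laplacian matrix of a graph. -/
noncomputable def lap {V : Type*} [Fintype V] [DecidableEq V] (G : SimpleGraph V) :
    Matrix V V ℝ :=
  fun i j => if i = j then (G.degree i : ℝ) else if G.Adj i j then -1 else 0

/-- Effective resistance computed from a (Moore–Penrose inverse) matrix `Ld`. -/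
noncomputable def effRes {V : Type*} [Fintype V] [DecidableEq V] (Ld : Matrix V V ℝ)
    (i j : V) : ℝ :=
  (Pi.single i 1 - Pi.single j 1) ⬝ᵥ Ld.mulVec (Pi.single i 1 - Pi.single j 1)

/-- Transition matrix of the simple random walk on `G`. -/
noncomputable def transP {V : Type*} [Fintype V] (G : SimpleGraph V) : Matrix V V ℝ :=
  fun i j => if G.Adj i j then (1 : ℝ) / (G.degree i) else 0

/-- Stationary distribution of the simple random walk. -/
noncomputable def statPi {V : Type*} [Fintype V] (G : SimpleGraph V) (i : V) : ℝ :=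
  (G.degree i : ℝ) / (2 * G.edgeFinset.card)

/-- `M` is the matrix of mean first passage times of the random walk on `G`. -/
def IsMFPT {V : Type*} [Fintype V] (G : SimpleGraph V) (M : V → V → ℝ) : Prop :=
  (∀ j, M j j = 0) ∧ ∀ i j, i ≠ j → M i j = 1 + ∑ k, transP G i k * M k j

/-- Kemeny's constant. -/
noncomputable def kemeny {V : Type*} [Fintype V] (G : SimpleGraph V) (M : V → V → ℝ) : ℝ :=
  ∑ i, ∑ j ∈ Finset.univ.filter (· ≠ i), statPi G i * M i j * statPi G j

/-- Accessibility index of vertex `v`. -/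
noncomputable def acc {V : Type*} [Fintype V] (G : SimpleGraph V) (M : V → V → ℝ) (v : V) : ℝ :=
  ∑ i ∈ Finset.univ.filter (· ≠ v), statPi G i * M i v

/-- Joining `G1` and `G2` by the bridge `v1 ∼ v2`. -/
def chainTwo {V1 V2 : Type*} (G1 : SimpleGraph V1) (G2 : SimpleGraph V2)
    (v1 : V1) (v2 : V2) : SimpleGraph (V1 ⊕ V2) where
  Adj p q :=
    match p, q with
    | Sum.inl a, Sum.inl b => G1.Adj a b
    | Sum.inr a, Sum.inr b => G2.Adj a b
    | Sum.inl a, Sum.inr b => a = v1 ∧ b = v2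
    | Sum.inr a, Sum.inl b => b = v1 ∧ a = v2
  symm := by
    constructor
    rintro (a | a) (b | b) h
    · exact G1.adj_symm h
    · exact ⟨h.1, h.2⟩
    · exact ⟨h.1, h.2⟩
    · exact G2.adj_symm h
  loopless := by
    constructor
    rintro (a | a) h
    · exact G1.irrefl h
    · exact G2.irrefl h

end

namespace SimpleGraph

variable {V : Type*} [Fintype V] {G : SimpleGraph V}

lemma sum_degrees_eq_twice_card_edges_real : ∑ i, (G.degree i : ℝ) = 2 * G.edgeFinset.card := by
  exact_mod_cast G.sum_degrees_eq_twice_card_edges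

lemma two_mul_card_edgeFinset_mul_statPi (i : V) :
    2 * (G.edgeFinset.card : ℝ) * statPi G i = G.degree i := by
  rcases eq_or_ne G.edgeFinset.card 0 with h | h
  · have hdeg := G.sum_degrees_eq_twice_card_edges
    rw [h, mul_zero, Finset.sum_eq_zero_iff] at hdeg
    simp [h, hdeg i (Finset.mem_univ i)]
  · unfold statPi
    field_simp

lemma sum_statPi (h : G.edgeFinset.card ≠ 0) : ∑ i, statPi G i = 1 := by
  have h2 : 2 * (G.edgeFinset.card : ℝ) ≠ 0 := by positivity
  apply mul_left_cancel₀ h2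
  rw [Finset.mul_sum, Finset.sum_congr rfl fun i _ => two_mul_card_edgeFinset_mul_statPi i,
    sum_degrees_eq_twice_card_edges_real, mul_one]

lemma sum_sum_neighborFinset (f : V → ℝ) :
    ∑ i, ∑ k ∈ G.neighborFinset i, f k = ∑ k, G.degree k * f k := by
  simp only [neighborFinset_eq_filter, Finset.sum_filter]
  rw [Finset.sum_comm]
  refine Finset.sum_congr rfl fun k _ => ?_
  rw [← Finset.sum_filter, Finset.sum_const, nsmul_eq_mul, ← card_neighborFinset_eq_degree,
    neighborFinset_eq_filter]
  simp only [G.adj_comm]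

lemma degree_mul_sum_transP (i : V) (f : V → ℝ) :
    G.degree i * ∑ k, transP G i k * f k = ∑ k ∈ G.neighborFinset i, f k := by
  rw [neighborFinset_eq_filter, Finset.sum_filter, Finset.mul_sum]
  refine Finset.sum_congr rfl fun k _ => ?_
  unfold transP
  split_ifs with h
  · have : (G.degree i : ℝ) ≠ 0 := by
      exact_mod_cast (G.degree_pos_iff_exists_adj i).2 ⟨k, h⟩ |>.ne'
    field_simp
  · simp

lemma Connected.card_edgeFinset_ne_zero [Nontrivial V] (hG : G.Connected) :
    G.edgeFinset.card ≠ 0 := by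
  obtain ⟨i⟩ := (inferInstance : Nonempty V)
  obtain ⟨k, hk⟩ :=
    (G.degree_pos_iff_exists_adj i).1 (hG.preconnected.degree_pos_of_nontrivial i)
  exact Finset.card_ne_zero_of_mem (G.mem_edgeFinset.2 (G.mem_edgeSet.2 hk))

lemma le_of_degree_mul_eq_sum (hG : G.Connected) {f : V → ℝ} {j : V}
    (hf : ∀ i, i ≠ j → G.degree i * f i = ∑ k ∈ G.neighborFinset i, f k) (i : V) :
    f i ≤ f j := by
  have := hG.nonempty
  obtain ⟨i₀, hi₀⟩ := Finite.exists_max f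
  have propagate : ∀ a b, G.Adj a b → a ≠ j → f a = f i₀ → f b = f i₀ := by
    intro a b hab haj ha
    have hzero : ∑ k ∈ G.neighborFinset a, (f i₀ - f k) = 0 := by
      rw [Finset.sum_sub_distrib, Finset.sum_const, card_neighborFinset_eq_degree,
        nsmul_eq_mul, ← hf a haj, ha, sub_self]
    have := (Finset.sum_eq_zero_iff_of_nonneg fun k _ => sub_nonneg.2 (hi₀ k)).1 hzero b
      ((G.mem_neighborFinset a b).2 hab)
    linarith
  have reach : ∀ a, Relation.ReflTransGen G.Adj a j → f a = f i₀ → f j = f i₀ := by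
    intro a hreach
    induction hreach using Relation.ReflTransGen.head_induction_on with
    | refl => exact id
    | @head a b hab _ ih =>
      intro ha
      by_cases haj : a = j
      · exact haj ▸ ha
      · exact ih (propagate a b hab haj ha)
  have hj := reach i₀ ((reachable_iff_reflTransGen _ _).1 (hG.preconnected i₀ j)) rfl
  exact hj ▸ hi₀ i

end SimpleGraph

namespace IsMFPT

variable {V : Type*} [Fintype V] {G : SimpleGraph V} {M : V → V → ℝ}

lemma degree_mul_of_ne (hM : IsMFPT G M) {i j : V} (hij : i ≠ j) :
    G.degree i * M i j = G.degree i + ∑ k ∈ G.neighborFinset i, M k j := by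
  rw [hM.2 i j hij, mul_add, mul_one, degree_mul_sum_transP]

lemma of_degree_mul (hG : G.Connected) (hdiag : ∀ j, M j j = 0)
    (h : ∀ i j, i ≠ j →
      G.degree i * M i j = G.degree i + ∑ k ∈ G.neighborFinset i, M k j) :
    IsMFPT G M := by
  refine ⟨hdiag, fun i j hij => ?_⟩
  have : Nontrivial V := ⟨i, j, hij⟩
  have hdeg : (G.degree i : ℝ) ≠ 0 := by
    exact_mod_cast (hG.preconnected.degree_pos_of_nontrivial i).ne'
  apply mul_left_cancel₀ hdeg
  rw [h i j hij, mul_add, mul_one, degree_mul_sum_transP]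

/-- Kac's formula `M⁺ j j = 1 / π j` for the return time, in terms of the neighbours of `j`. -/
lemma sum_neighborFinset_self (hM : IsMFPT G M) (j : V) :
    ∑ k ∈ G.neighborFinset j, M k j = 2 * G.edgeFinset.card - G.degree j := by
  have hsum : ∑ i ∈ Finset.univ.erase j, (G.degree i : ℝ) * M i j
      = ∑ i ∈ Finset.univ.erase j, (G.degree i + ∑ k ∈ G.neighborFinset i, M k j) :=
    Finset.sum_congr rfl fun i hi => hM.degree_mul_of_ne (Finset.ne_of_mem_erase hi)
  rw [Finset.sum_erase _ (by rw [hM.1 j, mul_zero]), Finset.sum_erase_eq_sub (Finset.mem_univ j),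
    Finset.sum_add_distrib, sum_degrees_eq_twice_card_edges_real, sum_sum_neighborFinset] at hsum
  linarith

lemma degree_mul (hM : IsMFPT G M) (i j : V) :
    G.degree i * M i j
      = G.degree i + ∑ k ∈ G.neighborFinset i, M k j
        - if i = j then 2 * (G.edgeFinset.card : ℝ) else 0 := by
  by_cases hij : i = j
  · subst hij
    rw [hM.1, hM.sum_neighborFinset_self, if_pos rfl]
    ring
  · rw [hM.degree_mul_of_ne hij, if_neg hij, sub_zero]

lemma unique (hG : G.Connected) {M' : V → V → ℝ} (hM : IsMFPT G M) (hM' : IsMFPT G M') :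
    M = M' := by
  funext i j
  have harmonic (A B : V → V → ℝ) (hA : IsMFPT G A) (hB : IsMFPT G B) (i : V)
      (hij : i ≠ j) :
      G.degree i * (A i j - B i j) = ∑ k ∈ G.neighborFinset i, (A k j - B k j) := by
    rw [Finset.sum_sub_distrib]
    linear_combination hA.degree_mul_of_ne hij - hB.degree_mul_of_ne hij
  have h₁ := le_of_degree_mul_eq_sum hG (harmonic M M' hM hM') i
  have h₂ := le_of_degree_mul_eq_sum hG (harmonic M' M hM' hM) i
  rw [hM.1, hM'.1] at h₁ h₂
  linarith

lemma kemeny_eq_sum (hM : IsMFPT G M) :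
    kemeny G M = ∑ i, ∑ j, statPi G i * M i j * statPi G j := by
  refine Finset.sum_congr rfl fun i _ => Finset.sum_filter_of_ne fun j _ h hji => ?_
  simp [hji, hM.1] at h

lemma acc_eq_sum (hM : IsMFPT G M) (v : V) : acc G M v = ∑ i, statPi G i * M i v :=
  Finset.sum_filter_of_ne fun i _ h hiv => by simp [hiv, hM.1] at h

/-- The random target lemma. -/
lemma sum_degree_mul_eq_kemeny (hG : G.Connected) (hM : IsMFPT G M) (i : V) :
    ∑ j, G.degree j * M i j = 2 * G.edgeFinset.card * kemeny G M := by
  set u : V → ℝ := fun i => ∑ j, G.degree j * M i j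
  have harmonic (i : V) : G.degree i * u i = ∑ k ∈ G.neighborFinset i, u k := by
    simp only [u, Finset.mul_sum, mul_left_comm (G.degree i : ℝ), hM.degree_mul i, mul_sub,
      mul_add, Finset.sum_sub_distrib, Finset.sum_add_distrib, ← Finset.sum_mul,
      sum_degrees_eq_twice_card_edges_real, mul_ite, mul_zero, Finset.sum_ite_eq,
      Finset.mem_univ, if_true]
    rw [Finset.sum_comm]
    ring
  have hconst (a b : V) : u a = u b :=
    le_antisymm (le_of_degree_mul_eq_sum hG (fun i _ => harmonic i) a)
      (le_of_degree_mul_eq_sum hG (fun i _ => harmonic i) b)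
  rcases eq_or_ne G.edgeFinset.card 0 with hE | hE
  · have hdeg (j : V) : (G.degree j : ℝ) = 0 := by
      rw [← two_mul_card_edgeFinset_mul_statPi, hE]; simp
    simp [hE, hdeg]
  calc u i = ∑ a, statPi G a * u a := by
        simp only [hconst _ i, ← Finset.sum_mul, sum_statPi hE, one_mul]
    _ = 2 * G.edgeFinset.card * kemeny G M := by
        simp only [u, hM.kemeny_eq_sum, Finset.mul_sum, ← two_mul_card_edgeFinset_mul_statPi]
        exact Finset.sum_congr rfl fun a _ => Finset.sum_congr rfl fun b _ => by ring

lemma sum_degree_mul_eq_acc (hM : IsMFPT G M) (v : V) :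
    ∑ i, G.degree i * M i v = 2 * G.edgeFinset.card * acc G M v := by
  simp only [hM.acc_eq_sum, Finset.mul_sum, ← mul_assoc, two_mul_card_edgeFinset_mul_statPi]

end IsMFPT

noncomputable def bridgeBlock {V : Type*} (M : V → V → ℝ) (v : V) (c : ℝ) (i j : V) : ℝ :=
  M i j + c * (M i j + M j v - M i v)

lemma sum_neighborFinset_bridgeBlock {V : Type*} [Fintype V] (G : SimpleGraph V)
    (M : V → V → ℝ) (v : V) (c : ℝ) (i j : V) :
    ∑ k ∈ G.neighborFinset i, bridgeBlock M v c k j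
      = (1 + c) * ∑ k ∈ G.neighborFinset i, M k j + c * (G.degree i * M j v)
        - c * ∑ k ∈ G.neighborFinset i, M k v := by
  simp only [bridgeBlock, Finset.sum_add_distrib, Finset.sum_sub_distrib, ← Finset.mul_sum,
    Finset.sum_const, card_neighborFinset_eq_degree, nsmul_eq_mul]
  ring

lemma IsMFPT.sum_degree_mul_bridgeBlock {V : Type*} [Fintype V] {G : SimpleGraph V}
    {M : V → V → ℝ} (hG : G.Connected) (hM : IsMFPT G M) (v : V) (a : ℝ) :
    ∑ j, G.degree j * bridgeBlock M v (a / G.edgeFinset.card) v j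
      = 2 * (G.edgeFinset.card + a) * kemeny G M + 2 * a * acc G M v := by
  have hsum : ∑ j, G.degree j * bridgeBlock M v (a / G.edgeFinset.card) v j
      = (1 + a / G.edgeFinset.card) * ∑ j, G.degree j * M v j
        + a / G.edgeFinset.card * ∑ j, G.degree j * M j v := by
    simp only [bridgeBlock, hM.1, sub_zero, Finset.mul_sum, ← Finset.sum_add_distrib]
    exact Finset.sum_congr rfl fun j _ => by ring
  rw [hsum, hM.sum_degree_mul_eq_kemeny hG, hM.sum_degree_mul_eq_acc]
  rcases eq_or_ne G.edgeFinset.card 0 with hE | hE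
  · have hκ : kemeny G M = 0 := by simp [kemeny, statPi, hE]
    have hα : acc G M v = 0 := by simp [acc, statPi, hE]
    simp [hκ, hα]
  · field_simp

section chainTwo

lemma chainTwo_connected {V1 V2 : Type*} {G1 : SimpleGraph V1} {G2 : SimpleGraph V2}
    (v1 : V1) (v2 : V2) (h1 : G1.Connected) (h2 : G2.Connected) :
    (chainTwo G1 G2 v1 v2).Connected := by
  have hl (a : V1) : (chainTwo G1 G2 v1 v2).Reachable (Sum.inl a) (Sum.inl v1) :=
    (h1.preconnected a v1).map ⟨Sum.inl, id⟩
  have hr (b : V2) : (chainTwo G1 G2 v1 v2).Reachable (Sum.inr b) (Sum.inl v1) :=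
    ((h2.preconnected b v2).map ⟨Sum.inr, id⟩).trans (Adj.reachable ⟨rfl, rfl⟩)
  have hub : ∀ p, (chainTwo G1 G2 v1 v2).Reachable p (Sum.inl v1) := by
    rintro (a | b)
    exacts [hl a, hr b]
  exact (connected_iff _).2 ⟨fun p q => (hub p).trans (hub q).symm, ⟨Sum.inl v1⟩⟩

variable {V1 V2 : Type*} [Fintype V1] [Fintype V2]
  (G1 : SimpleGraph V1) (G2 : SimpleGraph V2) (v1 : V1) (v2 : V2)

lemma chainTwo_sum_neighborFinset_inl {β : Type*} [AddCommMonoid β] (f : V1 ⊕ V2 → β)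
    (i : V1) :
    ∑ k ∈ (chainTwo G1 G2 v1 v2).neighborFinset (Sum.inl i), f k
      = ∑ k ∈ G1.neighborFinset i, f (Sum.inl k) + if i = v1 then f (Sum.inr v2) else 0 := by
  simp only [neighborFinset_eq_filter, Finset.sum_filter, Fintype.sum_sum_type]
  congr 1
  by_cases hi : i = v1 <;> simp [chainTwo, hi]

lemma chainTwo_sum_neighborFinset_inr {β : Type*} [AddCommMonoid β] (f : V1 ⊕ V2 → β)
    (j : V2) :
    ∑ k ∈ (chainTwo G1 G2 v1 v2).neighborFinset (Sum.inr j), f k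
      = ∑ k ∈ G2.neighborFinset j, f (Sum.inr k) + if j = v2 then f (Sum.inl v1) else 0 := by
  simp only [neighborFinset_eq_filter, Finset.sum_filter, Fintype.sum_sum_type, add_comm]
  congr 1
  by_cases hj : j = v2 <;> simp [chainTwo, hj]

lemma chainTwo_degree_inl (i : V1) :
    (chainTwo G1 G2 v1 v2).degree (Sum.inl i) = G1.degree i + if i = v1 then 1 else 0 := by
  simp only [← card_neighborFinset_eq_degree, Finset.card_eq_sum_ones]
  exact chainTwo_sum_neighborFinset_inl G1 G2 v1 v2 (fun _ => 1) i

lemma chainTwo_degree_inr (j : V2) :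
    (chainTwo G1 G2 v1 v2).degree (Sum.inr j) = G2.degree j + if j = v2 then 1 else 0 := by
  simp only [← card_neighborFinset_eq_degree, Finset.card_eq_sum_ones]
  exact chainTwo_sum_neighborFinset_inr G1 G2 v1 v2 (fun _ => 1) j

lemma chainTwo_sum_degree_mul (f : V1 ⊕ V2 → ℝ) :
    ∑ q, (chainTwo G1 G2 v1 v2).degree q * f q
      = ∑ i, G1.degree i * f (Sum.inl i) + f (Sum.inl v1)
        + (∑ j, G2.degree j * f (Sum.inr j) + f (Sum.inr v2)) := by
  simp [Fintype.sum_sum_type, chainTwo_degree_inl, chainTwo_degree_inr, add_mul,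
    Finset.sum_add_distrib]

lemma chainTwo_card_edgeFinset :
    (chainTwo G1 G2 v1 v2).edgeFinset.card = G1.edgeFinset.card + G2.edgeFinset.card + 1 := by
  have h := chainTwo_sum_degree_mul G1 G2 v1 v2 fun _ => 1
  simp only [mul_one, sum_degrees_eq_twice_card_edges_real] at h
  exact_mod_cast (by linarith : ((chainTwo G1 G2 v1 v2).edgeFinset.card : ℝ)
    = G1.edgeFinset.card + G2.edgeFinset.card + 1)

end chainTwo

/-- The walk from `i` to `j` inside `G1` spends, on top of `M1 i j`, one excursion into `G2` per
visit to `v1`; the expected number of these visits is proportional to `M1 i j + M1 j v1 - M1 i v1`,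
with the constant fixed by the first-step equation at `v1`. By Kac's formula, crossing the bridge
from `v1` takes `2 m1 + 1` steps on average. -/
noncomputable def chainTwoMFPT {V1 V2 : Type*} [Fintype V1] [Fintype V2]
    (G1 : SimpleGraph V1) (G2 : SimpleGraph V2) (v1 : V1) (v2 : V2)
    (M1 : V1 → V1 → ℝ) (M2 : V2 → V2 → ℝ) : V1 ⊕ V2 → V1 ⊕ V2 → ℝ
  | .inl i, .inl j =>
      bridgeBlock M1 v1 ((G2.edgeFinset.card + 1) / G1.edgeFinset.card) i j
  | .inr i, .inr j =>
      bridgeBlock M2 v2 ((G1.edgeFinset.card + 1) / G2.edgeFinset.card) i j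
  | .inl i, .inr j => M1 i v1 + (2 * G1.edgeFinset.card + 1)
      + bridgeBlock M2 v2 ((G1.edgeFinset.card + 1) / G2.edgeFinset.card) v2 j
  | .inr i, .inl j => M2 i v2 + (2 * G2.edgeFinset.card + 1)
      + bridgeBlock M1 v1 ((G2.edgeFinset.card + 1) / G1.edgeFinset.card) v1 j

section chainTwoMFPT

variable {V1 V2 : Type*} [Fintype V1] [Fintype V2]
  {G1 : SimpleGraph V1} {G2 : SimpleGraph V2} {v1 : V1} {v2 : V2}
  {M1 : V1 → V1 → ℝ} {M2 : V2 → V2 → ℝ}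

lemma chainTwoMFPT_swap (p q : V2 ⊕ V1) :
    chainTwoMFPT G2 G1 v2 v1 M2 M1 p q = chainTwoMFPT G1 G2 v1 v2 M1 M2 p.swap q.swap := by
  cases p <;> cases q <;> rfl

lemma chainTwoMFPT_degree_mul_inl (h1 : G1.Connected) (hM1 : IsMFPT G1 M1)
    (hM2 : IsMFPT G2 M2) (i : V1) (q : V1 ⊕ V2) (hq : Sum.inl i ≠ q) :
    (chainTwo G1 G2 v1 v2).degree (Sum.inl i) * chainTwoMFPT G1 G2 v1 v2 M1 M2 (Sum.inl i) q
      = (chainTwo G1 G2 v1 v2).degree (Sum.inl i)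
        + ∑ k ∈ (chainTwo G1 G2 v1 v2).neighborFinset (Sum.inl i),
            chainTwoMFPT G1 G2 v1 v2 M1 M2 k q := by
  rw [chainTwo_degree_inl, chainTwo_sum_neighborFinset_inl]
  have hKac := hM1.sum_neighborFinset_self v1
  rcases q with j | j
  · have hij : i ≠ j := fun h => hq (congrArg Sum.inl h)
    simp only [chainTwoMFPT, sum_neighborFinset_bridgeBlock]
    have hj := hM1.degree_mul_of_ne hij
    by_cases hi : i = v1
    · subst hi
      have hc : (G2.edgeFinset.card + 1) / (G1.edgeFinset.card : ℝ) * G1.edgeFinset.card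
          = G2.edgeFinset.card + 1 :=
        have : Nontrivial V1 := ⟨_, _, hij⟩
        div_mul_cancel₀ _ (by exact_mod_cast h1.card_edgeFinset_ne_zero)
      simp only [bridgeBlock, hM1.1, hM2.1, if_true]
      push_cast
      linear_combination (1 + (G2.edgeFinset.card + 1) / (G1.edgeFinset.card : ℝ)) * hj
        + (G2.edgeFinset.card + 1) / (G1.edgeFinset.card : ℝ) * hKac + 2 * hc
    · have hv := hM1.degree_mul_of_ne hi
      simp only [bridgeBlock, hi, if_false]
      push_cast
      linear_combination (1 + (G2.edgeFinset.card + 1) / (G1.edgeFinset.card : ℝ)) * hj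
        - (G2.edgeFinset.card + 1) / (G1.edgeFinset.card : ℝ) * hv
  · simp only [chainTwoMFPT, Finset.sum_add_distrib, Finset.sum_const,
      card_neighborFinset_eq_degree, nsmul_eq_mul]
    by_cases hi : i = v1
    · subst hi
      simp only [hM1.1, if_true]
      push_cast
      linear_combination -hKac
    · have hv := hM1.degree_mul_of_ne hi
      simp only [hi, if_false]
      push_cast
      linear_combination hv

lemma isMFPT_chainTwoMFPT (h1 : G1.Connected) (h2 : G2.Connected)
    (hM1 : IsMFPT G1 M1) (hM2 : IsMFPT G2 M2) :
    IsMFPT (chainTwo G1 G2 v1 v2) (chainTwoMFPT G1 G2 v1 v2 M1 M2) := by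
  refine .of_degree_mul (chainTwo_connected v1 v2 h1 h2) ?_ ?_
  · rintro (j | j) <;> simp [chainTwoMFPT, bridgeBlock, hM1.1, hM2.1]
  · rintro (i | i) q hq
    · exact chainTwoMFPT_degree_mul_inl h1 hM1 hM2 i q hq
    · have h := chainTwoMFPT_degree_mul_inl (v1 := v2) (v2 := v1) h2 hM2 hM1 i q.swap
        fun h => hq (by simpa using congrArg Sum.swap h)
      rw [chainTwo_degree_inl, chainTwo_sum_neighborFinset_inl] at h
      rw [chainTwo_degree_inr, chainTwo_sum_neighborFinset_inr]
      simpa only [chainTwoMFPT_swap (G1 := G1), Sum.swap_inl, Sum.swap_inr, Sum.swap_swap] using h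

end chainTwoMFPT

/-- Kemeny's constant of a graph with a bridge:
`κ(G) = κ(G1) + κ(G2) + ((m2+1)/m)·α_{G1}(v1) + ((m1+1)/m)·α_{G2}(v2)
        + (2m1+1)(2m2+1)/(2m)`. -/
theorem kemeny_chainTwo {V1 V2 : Type*} [Fintype V1] [Fintype V2]
    (G1 : SimpleGraph V1) (G2 : SimpleGraph V2) (v1 : V1) (v2 : V2)
    (h1 : G1.Connected) (h2 : G2.Connected)
    (M : (V1 ⊕ V2) → (V1 ⊕ V2) → ℝ) (M1 : V1 → V1 → ℝ) (M2 : V2 → V2 → ℝ)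
    (hM : IsMFPT (chainTwo G1 G2 v1 v2) M) (hM1 : IsMFPT G1 M1) (hM2 : IsMFPT G2 M2)
    (m1 m2 m : ℕ) (hm1 : m1 = G1.edgeFinset.card) (hm2 : m2 = G2.edgeFinset.card)
    (hm : m = m1 + m2 + 1) :
    kemeny (chainTwo G1 G2 v1 v2) M =
      kemeny G1 M1 + kemeny G2 M2 +
      (((m2 : ℝ) + 1) / (m : ℝ)) * acc G1 M1 v1 +
      (((m1 : ℝ) + 1) / (m : ℝ)) * acc G2 M2 v2 +
      (2 * (m1 : ℝ) + 1) * (2 * (m2 : ℝ) + 1) / (2 * (m : ℝ)) := by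
  subst hm1 hm2 hm
  have hG := chainTwo_connected v1 v2 h1 h2
  have hMhat := isMFPT_chainTwoMFPT (v1 := v1) (v2 := v2) h1 h2 hM1 hM2
  obtain rfl := hM.unique hG hMhat
  have key := hMhat.sum_degree_mul_eq_kemeny hG (Sum.inl v1)
  simp only [chainTwo_sum_degree_mul, chainTwo_card_edgeFinset, chainTwoMFPT, mul_add,
    Finset.sum_add_distrib, ← Finset.sum_mul, sum_degrees_eq_twice_card_edges_real,
    hM1.sum_degree_mul_bridgeBlock h1, hM2.sum_degree_mul_bridgeBlock h2] at key
  simp only [bridgeBlock, hM1.1, hM2.1, Nat.cast_add, Nat.cast_one] at key ⊢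
  field_simp
  linear_combination -key
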